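/- (Barycentric Lemma) Suppose (x_i, v_i)_{i=1}^N follows the sticky particle Cucker–Smale dynamics associated to masses (m_i)_{i=1}^N and protocol φ, and define ψ_i(t) = v_i(t) + Σ_{j=1}^N m_j Φ(x_i(t) − x_j(t)) with Φ(x) = ∫_0^x φ(y)dy. Fix i ∈ {1,…,N} and t > 0, and set i_*(t) = min J_i(t), i^*(t) = max J_i(t). Then for every k ∈ J_i(t): (Σ_{j=i_*(t)}^k m_j ψ_j(t−)) / (Σ_{j=i_*(t)}^k m_j) ≥ (Σ_{j∈J_i(t)} m_j ψ_j(t−)) / (Σ_{j∈J_i(t)} m_j) = ψ_i(t+) ≥ (Σ_{j=k}^{i^*(t)} m_j ψ_j(t−)) / (Σ_{j=k}^{i^*(t)} m_j), where ψ_j(t−) and ψ_i(t+) denote left and right limits at t (with ψ_i(t+) = ψ_i(t) by right-continuity). -/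

import Mathlib

open MeasureTheory Set Filter
open scoped Classical

/-- `Φ(x) = ∫_0^x φ(y) dy`, the odd antiderivative of the communication protocol. -/
noncomputable def Phi (φ : ℝ → ℝ) (x : ℝ) : ℝ := ∫ y in (0:ℝ)..x, φ y

/-- The sticky particle Cucker–Smale dynamics with `N` particles, masses `m`,
communication protocol `φ`, collision-time set `C`, positions `x` and velocities `v`. -/
structure StickyCS (N : ℕ) (m : Fin N → ℝ) (φ : ℝ → ℝ) (C : Set ℝ)
    (x v : Fin N → ℝ → ℝ) : Prop where
  m_pos : ∀ i, 0 < m i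
  m_sum : ∑ i, m i = 1
  φ_nonneg : ∀ z, 0 ≤ φ z
  φ_even : ∀ z, φ (-z) = φ z
  φ_locint : ∀ a b : ℝ, IntervalIntegrable φ volume a b
  φ_anti : AntitoneOn φ (Ioi 0)
  φ_cont : ContinuousOn φ {(0:ℝ)}ᶜ
  C_fin : C.Finite
  C_pos : C ⊆ Ioi 0
  x_cont : ∀ i, ContinuousOn (x i) (Ici 0)
  x_ord : ∀ i j : Fin N, i ≤ j → ∀ t ∈ Ici (0:ℝ), x i t ≤ x j t
  v_rc : ∀ i, ∀ t ∈ Ici (0:ℝ), ContinuousWithinAt (v i) (Ici t) t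
  x_deriv : ∀ i, ∀ t ∈ Ici (0:ℝ) \ C, HasDerivWithinAt (x i) (v i t) (Ici 0) t
  v_deriv : ∀ i, ∀ t ∈ Ici (0:ℝ) \ C, HasDerivWithinAt (v i)
      (∑ j ∈ Finset.univ.filter (fun j => x j t ≠ x i t),
        m j * φ (x j t - x i t) * (v j t - v i t)) (Ici 0) t
  sticky : ∀ i j : Fin N, ∀ s t : ℝ, 0 ≤ s → s ≤ t → x i s = x j s → x i t = x j t
  collide : ∀ τ ∈ C, ∀ i : Fin N,
      v i τ = (∑ j ∈ Finset.univ.filter (fun j => x j τ = x i τ),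
                m j * Function.leftLim (v j) τ)
              / (∑ j ∈ Finset.univ.filter (fun j => x j τ = x i τ), m j)

/-!
Between collisions `ψ_j = v_j + Σ_l m_l Φ(x_j - x_l)` is constant, because by evenness of `φ` the
time derivative of the potential term is exactly minus the alignment force; so `ψ_j(t-)` is the
value of `ψ_j` just before `t`. Conservation of momentum at a collision (and equality of the
velocities of stuck particles otherwise) makes the mass-weighted mean of `ψ_j(t-)` over the
cluster `J_i(t)` equal to `ψ_i(t)`, the potentials of stuck particles being equal. Along the
cluster, which is an index interval, `j ↦ ψ_j(t-)` is antitone: for `j < l` the potentials agree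
at `t`, so `ψ_l(t-) > ψ_j(t-)` would give `v_l > v_j` just before `t`, i.e. `x_l < x_j` there.
Finally, prefix means of an antitone sequence dominate its mean, which dominates suffix means.
-/

open scoped Topology

theorem Finset.eq_Icc_min'_max' {ι : Type*} [LinearOrder ι] [LocallyFiniteOrder ι]
    {s : Finset ι} (hs : s.Nonempty) (hconn : (s : Set ι).OrdConnected) :
    s = Finset.Icc (s.min' hs) (s.max' hs) := by
  ext j
  refine ⟨fun hj => Finset.mem_Icc.2 ⟨s.min'_le j hj, s.le_max' j hj⟩, fun hj => ?_⟩
  exact hconn.out (s.min'_mem hs) (s.max'_mem hs) (Finset.mem_Icc.1 hj)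

theorem Set.Finite.eventually_notMem_nhdsNE {X : Type*} [TopologicalSpace X] [T1Space X]
    {C : Set X} (hC : C.Finite) (t : X) :
    ∀ᶠ s in 𝓝[≠] t, s ∉ C := by
  have : ∀ᶠ s in 𝓝 t, s ∉ C \ {t} :=
    (hC.sdiff (t := {t})).isClosed.isOpen_compl.mem_nhds fun h => h.2 rfl
  filter_upwards [nhdsWithin_le_nhds this, self_mem_nhdsWithin] with s hs hst
  exact fun hsC => hs ⟨hsC, hst⟩

theorem nonpos_of_tendsto_deriv_nhdsLT_of_le {g g' : ℝ → ℝ} {t d : ℝ}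
    (hcont : ContinuousAt g t) (hderiv : ∀ᶠ s in 𝓝[<] t, HasDerivAt g (g' s) s)
    (hlim : Tendsto g' (𝓝[<] t) (𝓝 d)) (hle : ∀ᶠ s in 𝓝[<] t, g t ≤ g s) : d ≤ 0 := by
  by_contra! hd
  obtain ⟨a, hat : a < t, hsub⟩ := mem_nhdsLT_iff_exists_Ioo_subset.1
    (hderiv.and ((hlim.eventually (eventually_gt_nhds hd)).and hle))
  obtain ⟨b, hab, hbt⟩ := exists_between hat
  have hdiff : ∀ s ∈ Ioo b t, HasDerivAt g (g' s) s := fun s hs =>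
    (hsub ⟨hab.trans hs.1, hs.2⟩).1
  have hgc : ContinuousOn g (Icc b t) := by
    intro s hs
    rcases hs.2.eq_or_lt with rfl | hst
    · exact hcont.continuousWithinAt
    · exact (hsub ⟨hab.trans_le hs.1, hst⟩).1.continuousAt.continuousWithinAt
  obtain ⟨ξ, hξ, hslope⟩ := exists_hasDerivAt_eq_slope g g' hbt hgc hdiff
  have hpos : 0 < g' ξ := (hsub ⟨hab.trans hξ.1, hξ.2⟩).2.1
  have hgb : g t ≤ g b := (hsub ⟨hab, hbt⟩).2.2
  rw [hslope] at hpos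
  have := (div_pos_iff_of_pos_right (sub_pos.2 hbt)).1 hpos
  linarith

theorem continuous_Phi {φ : ℝ → ℝ} (hφ : ∀ a b : ℝ, IntervalIntegrable φ volume a b) :
    Continuous (Phi φ) :=
  intervalIntegral.continuous_primitive hφ 0

theorem hasDerivAt_Phi {φ : ℝ → ℝ} (hφ : ∀ a b : ℝ, IntervalIntegrable φ volume a b)
    (hcont : ContinuousOn φ {(0:ℝ)}ᶜ) {z : ℝ} (hz : z ≠ 0) :
    HasDerivAt (Phi φ) (φ z) z :=
  intervalIntegral.integral_hasDerivAt_right (hφ 0 z)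
    (hcont.stronglyMeasurableAtFilter isOpen_compl_singleton z hz)
    (hcont.continuousAt (compl_singleton_mem_nhds hz))

section WeightedMean

variable {ι : Type*} {w c : ι → ℝ}

theorem div_sum_union_le_div_sum [DecidableEq ι] {A B : Finset ι} {γ : ℝ} (hAB : Disjoint A B)
    (hA : A.Nonempty) (hwA : ∀ j ∈ A, 0 < w j) (hwB : ∀ j ∈ B, 0 ≤ w j)
    (hcA : ∀ j ∈ A, γ ≤ c j) (hcB : ∀ j ∈ B, c j ≤ γ) :
    (∑ j ∈ A ∪ B, w j * c j) / ∑ j ∈ A ∪ B, w j ≤ (∑ j ∈ A, w j * c j) / ∑ j ∈ A, w j := by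
  have hWA : 0 < ∑ j ∈ A, w j := Finset.sum_pos hwA hA
  have hWB : 0 ≤ ∑ j ∈ B, w j := Finset.sum_nonneg hwB
  have hSA : γ * ∑ j ∈ A, w j ≤ ∑ j ∈ A, w j * c j := by
    rw [Finset.mul_sum]
    exact Finset.sum_le_sum fun j hj => by nlinarith [hwA j hj, hcA j hj]
  have hSB : ∑ j ∈ B, w j * c j ≤ γ * ∑ j ∈ B, w j := by
    rw [Finset.mul_sum]
    exact Finset.sum_le_sum fun j hj => by nlinarith [hwB j hj, hcB j hj]
  rw [Finset.sum_union hAB, Finset.sum_union hAB, div_le_div_iff₀ (by linarith) hWA]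
  nlinarith [mul_le_mul_of_nonneg_left hSA hWB, mul_le_mul_of_nonneg_left hSB hWA.le]

theorem div_sum_le_div_sum_union [DecidableEq ι] {A B : Finset ι} {γ : ℝ} (hAB : Disjoint A B)
    (hA : A.Nonempty) (hwA : ∀ j ∈ A, 0 < w j) (hwB : ∀ j ∈ B, 0 ≤ w j)
    (hcA : ∀ j ∈ A, c j ≤ γ) (hcB : ∀ j ∈ B, γ ≤ c j) :
    (∑ j ∈ A, w j * c j) / ∑ j ∈ A, w j ≤ (∑ j ∈ A ∪ B, w j * c j) / ∑ j ∈ A ∪ B, w j := by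
  have := div_sum_union_le_div_sum (c := (- c ·)) (γ := -γ) hAB hA hwA hwB
    (fun j hj => neg_le_neg (hcA j hj)) (fun j hj => neg_le_neg (hcB j hj))
  simpa only [mul_neg, Finset.sum_neg_distrib, neg_div, neg_le_neg_iff] using this

variable [LinearOrder ι] [LocallyFiniteOrder ι] {a b k : ι}

theorem div_sum_Icc_le_div_sum_Icc_left (hw : ∀ j ∈ Finset.Icc a b, 0 < w j)
    (hc : AntitoneOn c (Set.Icc a b)) (hk : k ∈ Finset.Icc a b) :
    (∑ j ∈ Finset.Icc a b, w j * c j) / ∑ j ∈ Finset.Icc a b, w j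
      ≤ (∑ j ∈ Finset.Icc a k, w j * c j) / ∑ j ∈ Finset.Icc a k, w j := by
  obtain ⟨hak, hkb⟩ := Finset.mem_Icc.1 hk
  have hunion : Finset.Icc a k ∪ Finset.Ioc k b = Finset.Icc a b := by
    rw [← Finset.coe_inj]
    push_cast
    exact Set.Icc_union_Ioc_eq_Icc hak hkb
  have hmem : ∀ j ∈ Finset.Icc a k ∪ Finset.Ioc k b, j ∈ Set.Icc a b := fun j hj =>
    Finset.mem_Icc.1 (hunion ▸ hj)
  have hkmem : k ∈ Set.Icc a b := ⟨hak, hkb⟩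
  rw [← hunion]
  refine div_sum_union_le_div_sum (γ := c k) ?_ ⟨k, Finset.mem_Icc.2 ⟨hak, le_rfl⟩⟩
    (fun j hj => hw j (hunion ▸ Finset.mem_union_left _ hj))
    (fun j hj => (hw j (hunion ▸ Finset.mem_union_right _ hj)).le)
    (fun j hj => hc (hmem j (Finset.mem_union_left _ hj)) hkmem (Finset.mem_Icc.1 hj).2)
    (fun j hj => hc hkmem (hmem j (Finset.mem_union_right _ hj)) (Finset.mem_Ioc.1 hj).1.le)
  exact Finset.disjoint_left.2 fun j hj hj' =>
    (Finset.mem_Icc.1 hj).2.not_gt (Finset.mem_Ioc.1 hj').1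

theorem div_sum_Icc_right_le_div_sum_Icc (hw : ∀ j ∈ Finset.Icc a b, 0 < w j)
    (hc : AntitoneOn c (Set.Icc a b)) (hk : k ∈ Finset.Icc a b) :
    (∑ j ∈ Finset.Icc k b, w j * c j) / ∑ j ∈ Finset.Icc k b, w j
      ≤ (∑ j ∈ Finset.Icc a b, w j * c j) / ∑ j ∈ Finset.Icc a b, w j := by
  obtain ⟨hak, hkb⟩ := Finset.mem_Icc.1 hk
  have hunion : Finset.Icc k b ∪ Finset.Ico a k = Finset.Icc a b := by
    rw [← Finset.coe_inj]
    push_cast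
    exact (Set.union_comm _ _).trans (Set.Ico_union_Icc_eq_Icc hak hkb)
  have hmem : ∀ j ∈ Finset.Icc k b ∪ Finset.Ico a k, j ∈ Set.Icc a b := fun j hj =>
    Finset.mem_Icc.1 (hunion ▸ hj)
  have hkmem : k ∈ Set.Icc a b := ⟨hak, hkb⟩
  rw [← hunion]
  refine div_sum_le_div_sum_union (γ := c k) ?_ ⟨k, Finset.mem_Icc.2 ⟨le_rfl, hkb⟩⟩
    (fun j hj => hw j (hunion ▸ Finset.mem_union_left _ hj))
    (fun j hj => (hw j (hunion ▸ Finset.mem_union_right _ hj)).le)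
    (fun j hj => hc hkmem (hmem j (Finset.mem_union_left _ hj)) (Finset.mem_Icc.1 hj).1)
    (fun j hj => hc (hmem j (Finset.mem_union_right _ hj)) hkmem (Finset.mem_Ico.1 hj).2.le)
  exact Finset.disjoint_left.2 fun j hj hj' =>
    (Finset.mem_Icc.1 hj).1.not_gt (Finset.mem_Ico.1 hj').2

end WeightedMean

namespace StickyCS

variable {N : ℕ}

/-- The paper's `J_i(t)`. -/
noncomputable def cluster (x : Fin N → ℝ → ℝ) (i : Fin N) (t : ℝ) : Finset (Fin N) :=
  Finset.univ.filter fun j => x j t = x i t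

noncomputable def potential (m : Fin N → ℝ) (φ : ℝ → ℝ) (x : Fin N → ℝ → ℝ) (i : Fin N)
    (t : ℝ) : ℝ :=
  ∑ j, m j * Phi φ (x i t - x j t)

noncomputable def psi (m : Fin N → ℝ) (φ : ℝ → ℝ) (x v : Fin N → ℝ → ℝ) (i : Fin N)
    (t : ℝ) : ℝ :=
  v i t + potential m φ x i t

variable {m : Fin N → ℝ} {φ : ℝ → ℝ} {C : Set ℝ} {x v : Fin N → ℝ → ℝ} {i j l : Fin N}
  {s t : ℝ}

theorem mem_cluster : j ∈ cluster x i t ↔ x j t = x i t := by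
  simp [cluster]

theorem hasDerivAt_x (h : StickyCS N m φ C x v) (j : Fin N) (hs : 0 < s) (hsC : s ∉ C) :
    HasDerivAt (x j) (v j s) s :=
  (h.x_deriv j s ⟨hs.le, hsC⟩).hasDerivAt (Ici_mem_nhds hs)

theorem hasDerivAt_v (h : StickyCS N m φ C x v) (j : Fin N) (hs : 0 < s) (hsC : s ∉ C) :
    HasDerivAt (v j) (∑ l ∈ Finset.univ.filter (fun l => x l s ≠ x j s),
      m l * φ (x l s - x j s) * (v l s - v j s)) s :=
  (h.v_deriv j s ⟨hs.le, hsC⟩).hasDerivAt (Ici_mem_nhds hs)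

theorem eventually_pos_notMem_nhdsLT (h : StickyCS N m φ C x v) (ht : 0 < t) :
    ∀ᶠ s in 𝓝[<] t, 0 < s ∧ s ∉ C := by
  filter_upwards [Ioo_mem_nhdsLT ht, nhdsLT_le_nhdsNE t (h.C_fin.eventually_notMem_nhdsNE t)]
    with s hs hsC using ⟨hs.1, hsC⟩

theorem potential_eq_of_x_eq (hx : x i t = x j t) :
    potential m φ x i t = potential m φ x j t := by
  simp only [potential, hx]

theorem continuousAt_potential (h : StickyCS N m φ C x v) (i : Fin N) (hs : 0 < s) :
    ContinuousAt (potential m φ x i) s := by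
  have hx : ∀ j, ContinuousAt (x j) s := fun j => (h.x_cont j).continuousAt (Ici_mem_nhds hs)
  have hΦ := continuous_Phi h.φ_locint
  unfold potential
  fun_prop

theorem hasDerivWithinAt_potential (h : StickyCS N m φ C x v) (i : Fin N) (hs : 0 < s)
    (hsC : s ∉ C) :
    HasDerivWithinAt (potential m φ x i) (∑ l ∈ Finset.univ.filter (fun l => x l s ≠ x i s),
      m l * (φ (x i s - x l s) * (v i s - v l s))) (Ici s) s := by
  have hunstuck : HasDerivAt (fun u => ∑ l ∈ Finset.univ.filter (fun l => x l s ≠ x i s),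
      m l * Phi φ (x i u - x l u)) (∑ l ∈ Finset.univ.filter (fun l => x l s ≠ x i s),
      m l * (φ (x i s - x l s) * (v i s - v l s))) s := by
    refine HasDerivAt.fun_sum fun l hl => HasDerivAt.const_mul _ ?_
    have hne : x i s - x l s ≠ 0 := sub_ne_zero.2 (Ne.symm (Finset.mem_filter.1 hl).2)
    exact (hasDerivAt_Phi h.φ_locint h.φ_cont hne).comp s
      ((h.hasDerivAt_x i hs hsC).sub (h.hasDerivAt_x l hs hsC))
  -- stuck pairs contribute nothing from `s` on; before `s` they may not, hence `Ici s`
  refine hunstuck.hasDerivWithinAt.congr_of_mem (fun u hu => ?_) self_mem_Ici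
  rw [potential, ← Finset.sum_filter_add_sum_filter_not _ (fun l => x l s ≠ x i s),
    add_eq_left]
  refine Finset.sum_eq_zero fun l hl => ?_
  have hstuck : x i u = x l u :=
    h.sticky i l s u hs.le hu (not_not.1 (Finset.mem_filter.1 hl).2).symm
  rw [hstuck, sub_self, Phi, intervalIntegral.integral_same, mul_zero]

theorem hasDerivWithinAt_psi (h : StickyCS N m φ C x v) (i : Fin N) (hs : 0 < s)
    (hsC : s ∉ C) : HasDerivWithinAt (psi m φ x v i) 0 (Ici s) s := by
  have hsum := (h.hasDerivAt_v i hs hsC).hasDerivWithinAt.add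
    (h.hasDerivWithinAt_potential i hs hsC)
  rwa [← Finset.sum_add_distrib, Finset.sum_eq_zero fun l _ => ?_] at hsum
  rw [← neg_sub (x l s), h.φ_even]
  ring

theorem continuousAt_psi (h : StickyCS N m φ C x v) (i : Fin N) (hs : 0 < s) (hsC : s ∉ C) :
    ContinuousAt (psi m φ x v i) s :=
  (h.hasDerivAt_v i hs hsC).continuousAt.add (h.continuousAt_potential i hs)

theorem eventually_psi_eq_leftLim (h : StickyCS N m φ C x v) (i : Fin N) (ht : 0 < t) :
    ∀ᶠ s in 𝓝[<] t, psi m φ x v i s = Function.leftLim (psi m φ x v i) t := by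
  obtain ⟨a, hat : a < t, hfree⟩ :=
    mem_nhdsLT_iff_exists_Ioo_subset.1 (h.eventually_pos_notMem_nhdsLT ht)
  obtain ⟨b, hab, hbt⟩ := exists_between hat
  have hconst : ∀ s ∈ Ioo b t, psi m φ x v i s = psi m φ x v i b := by
    intro s hs
    have hfree' : ∀ u ∈ Icc b s, 0 < u ∧ u ∉ C := fun u hu =>
      hfree ⟨hab.trans_le hu.1, hu.2.trans_lt hs.2⟩
    refine constant_of_has_deriv_right_zero (fun u hu => ?_) (fun u hu => ?_) s
      (right_mem_Icc.2 hs.1.le)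
    · exact (h.continuousAt_psi i (hfree' u hu).1 (hfree' u hu).2).continuousWithinAt
    · exact h.hasDerivWithinAt_psi i (hfree' u (Ico_subset_Icc_self hu)).1
        (hfree' u (Ico_subset_Icc_self hu)).2
  have hev : ∀ᶠ s in 𝓝[<] t, psi m φ x v i s = psi m φ x v i b :=
    Filter.mem_of_superset (Ioo_mem_nhdsLT hbt) hconst
  rwa [leftLim_eq_of_tendsto (tendsto_const_nhds.congr' (hev.mono fun _ hs => hs.symm))]

theorem tendsto_v_nhdsLT (h : StickyCS N m φ C x v) (i : Fin N) (ht : 0 < t) :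
    Tendsto (v i) (𝓝[<] t)
      (𝓝 (Function.leftLim (psi m φ x v i) t - potential m φ x i t)) := by
  have hpsi : Tendsto (psi m φ x v i) (𝓝[<] t) (𝓝 (Function.leftLim (psi m φ x v i) t)) :=
    tendsto_const_nhds.congr' (EventuallyEq.symm (h.eventually_psi_eq_leftLim i ht))
  refine (hpsi.sub ((h.continuousAt_potential i ht).mono_left nhdsWithin_le_nhds)).congr
    fun s => ?_
  simp only [psi, add_sub_cancel_right]

theorem leftLim_psi (h : StickyCS N m φ C x v) (i : Fin N) (ht : 0 < t) :
    Function.leftLim (psi m φ x v i) t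
      = Function.leftLim (v i) t + potential m φ x i t := by
  rw [leftLim_eq_of_tendsto (h.tendsto_v_nhdsLT i ht), sub_add_cancel]

theorem v_eq_of_x_eq (h : StickyCS N m φ C x v) (ht : 0 < t) (htC : t ∉ C)
    (hx : x j t = x l t) : v j t = v l t := by
  have hstuck : ∀ u ∈ Ici t, x j u - x l u = 0 := fun u hu =>
    sub_eq_zero.2 (h.sticky j l t u ht.le hu hx)
  have hderiv := ((h.hasDerivAt_x j ht htC).sub (h.hasDerivAt_x l ht htC)).hasDerivWithinAt
    (s := Ici t)
  have hzero := (hasDerivWithinAt_const t (Ici t) (0 : ℝ)).congr_of_mem hstuck self_mem_Ici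
  exact sub_eq_zero.1 ((uniqueDiffOn_Ici t t self_mem_Ici).eq_deriv _ hderiv hzero)

theorem sum_cluster_mul_leftLim_v (h : StickyCS N m φ C x v) (i : Fin N) (ht : 0 < t) :
    ∑ j ∈ cluster x i t, m j * Function.leftLim (v j) t
      = (∑ j ∈ cluster x i t, m j) * v i t := by
  by_cases htC : t ∈ C
  · have hM : ∑ j ∈ cluster x i t, m j ≠ 0 :=
      (Finset.sum_pos (fun j _ => h.m_pos j) ⟨i, mem_cluster.2 rfl⟩).ne'
    rw [h.collide t htC i]
    exact (mul_div_cancel₀ _ hM).symm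
  · rw [Finset.sum_mul]
    refine Finset.sum_congr rfl fun j hj => ?_
    rw [leftLim_eq_of_tendsto ((h.hasDerivAt_v j ht htC).continuousAt.mono_left
      nhdsWithin_le_nhds), h.v_eq_of_x_eq ht htC (mem_cluster.1 hj)]

theorem div_sum_cluster_eq_psi (h : StickyCS N m φ C x v) (i : Fin N) (ht : 0 < t) :
    (∑ j ∈ cluster x i t, m j * Function.leftLim (psi m φ x v j) t)
      / (∑ j ∈ cluster x i t, m j) = psi m φ x v i t := by
  have hM : ∑ j ∈ cluster x i t, m j ≠ 0 :=
    (Finset.sum_pos (fun j _ => h.m_pos j) ⟨i, mem_cluster.2 rfl⟩).ne'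
  have hsplit : ∀ j ∈ cluster x i t, m j * Function.leftLim (psi m φ x v j) t
      = m j * Function.leftLim (v j) t + m j * potential m φ x i t := fun j hj => by
    rw [h.leftLim_psi j ht, potential_eq_of_x_eq (mem_cluster.1 hj), mul_add]
  rw [Finset.sum_congr rfl hsplit, Finset.sum_add_distrib, h.sum_cluster_mul_leftLim_v i ht,
    ← Finset.sum_mul, ← mul_add, mul_div_cancel_left₀ _ hM, psi]

theorem leftLim_psi_le (h : StickyCS N m φ C x v) (ht : 0 < t) (hjl : j ≤ l)
    (hx : x j t = x l t) :
    Function.leftLim (psi m φ x v l) t ≤ Function.leftLim (psi m φ x v j) t := by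
  have hlim := (h.tendsto_v_nhdsLT l ht).sub (h.tendsto_v_nhdsLT j ht)
  rw [potential_eq_of_x_eq hx.symm, sub_sub_sub_cancel_right] at hlim
  refine sub_nonpos.1 (nonpos_of_tendsto_deriv_nhdsLT_of_le (g := fun s => x l s - x j s)
    ?_ ?_ hlim ?_)
  · exact ((h.x_cont l).continuousAt (Ici_mem_nhds ht)).sub
      ((h.x_cont j).continuousAt (Ici_mem_nhds ht))
  · filter_upwards [h.eventually_pos_notMem_nhdsLT ht] with s hs
    exact (h.hasDerivAt_x l hs.1 hs.2).sub (h.hasDerivAt_x j hs.1 hs.2)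
  · filter_upwards [Ioo_mem_nhdsLT ht] with s hs
    rw [hx, sub_self, sub_nonneg]
    exact h.x_ord j l hjl s hs.1.le

theorem ordConnected_cluster (h : StickyCS N m φ C x v) (i : Fin N) (ht : 0 ≤ t) :
    (cluster x i t : Set (Fin N)).OrdConnected := by
  refine ⟨fun a ha b hb j hj => mem_cluster.2 (le_antisymm ?_ ?_)⟩
  · exact (mem_cluster.1 hb) ▸ h.x_ord j b hj.2 t ht
  · exact (mem_cluster.1 ha) ▸ h.x_ord a j hj.1 t ht

end StickyCS

/-- **Barycentric Lemma.** Fix `i` and `t > 0`, let `J = J_i(t)` be the set of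
particles stuck to particle `i` at time `t`, with extreme indices `i_* = min J`,
`i^* = max J`. Then for every `k ∈ J`, the average of `ψ_j(t−)` over `j = i_*, …, k` is at
least the average over all of `J`, which equals `ψ_i(t+) = ψ_i(t)`, which in turn is at
least the average over `j = k, …, i^*`. -/
theorem sticky_CS_barycentric {N : ℕ} (m : Fin N → ℝ) (φ : ℝ → ℝ)
    (C : Set ℝ) (x v : Fin N → ℝ → ℝ) (h : StickyCS N m φ C x v)
    (ψ : Fin N → ℝ → ℝ)
    (hψ : ∀ i t, ψ i t = v i t + ∑ j, m j * Phi φ (x i t - x j t))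
    (i : Fin N) (t : ℝ) (ht : 0 < t)
    (J : Finset (Fin N)) (hJ : J = Finset.univ.filter (fun j => x j t = x i t))
    (istar itop : Fin N)
    (histar : istar = J.min' ⟨i, by simp [hJ]⟩)
    (hitop : itop = J.max' ⟨i, by simp [hJ]⟩)
    (k : Fin N) (hk : k ∈ J) :
    ((∑ j ∈ Finset.Icc istar k, m j * Function.leftLim (ψ j) t)
        / (∑ j ∈ Finset.Icc istar k, m j)
      ≥ (∑ j ∈ J, m j * Function.leftLim (ψ j) t) / (∑ j ∈ J, m j)) ∧
    ((∑ j ∈ J, m j * Function.leftLim (ψ j) t) / (∑ j ∈ J, m j) = ψ i t) ∧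
    (ψ i t ≥ (∑ j ∈ Finset.Icc k itop, m j * Function.leftLim (ψ j) t)
        / (∑ j ∈ Finset.Icc k itop, m j)) := by
  obtain rfl : ψ = StickyCS.psi m φ x v := funext fun j => funext (hψ j)
  replace hJ : J = StickyCS.cluster x i t := hJ
  have hJI : J = Finset.Icc istar itop := by
    subst histar hitop
    exact J.eq_Icc_min'_max' _ (hJ ▸ h.ordConnected_cluster i ht.le)
  have hxJ : ∀ j ∈ Set.Icc istar itop, x j t = x i t := fun j hj =>
    StickyCS.mem_cluster.1 (hJ ▸ hJI ▸ Finset.mem_Icc.2 hj)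
  have hanti : AntitoneOn (fun j => Function.leftLim (StickyCS.psi m φ x v j) t)
      (Set.Icc istar itop) := fun j hj l hl hjl =>
    h.leftLim_psi_le ht hjl ((hxJ j hj).trans (hxJ l hl).symm)
  have hmean := hJ ▸ h.div_sum_cluster_eq_psi i ht
  have hkJ : k ∈ Finset.Icc istar itop := hJI ▸ hk
  refine ⟨?_, hmean, ?_⟩
  · rw [hJI]
    exact div_sum_Icc_le_div_sum_Icc_left (fun j _ => h.m_pos j) hanti hkJ
  · rw [← hmean, hJI]
    exact div_sum_Icc_right_le_div_sum_Icc (fun j _ => h.m_pos j) hanti hkJ
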